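/- arXiv:1808.00678 — 3 statements merged into one kernel-verified Lean document; each statement's English description precedes it below -/
import Mathlib

section
/- Let G be the group with presentation ⟨x, y, t | x^t = x^p, y^{t^{-1}} = y^p, [x,y] = 1, [[x, y^{j t^i}], x] = 1 for all i,j ∈ ℤ⟩, where p is a prime. Then the normal closure H of {x, y} in G is metabelian, and G is solvable of derived length at most 3. -/
/-- The commutator `[a,b] = a⁻¹b⁻¹ab`. -/
def br {G : Type*} [Group G] (a b : G) : G := a⁻¹ * b⁻¹ * a * b

/-- Conjugation `a^b = b⁻¹ab`. -/
def cnj {G : Type*} [Group G] (a b : G) : G := b⁻¹ * a * b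

namespace MikhailovGroup

/-- The generator `x` of the free group on three letters. -/
def X : FreeGroup (Fin 3) := FreeGroup.of 0

/-- The generator `y` of the free group on three letters. -/
def Y : FreeGroup (Fin 3) := FreeGroup.of 1

/-- The generator `t` of the free group on three letters. -/
def T : FreeGroup (Fin 3) := FreeGroup.of 2

/-- The relations `x^t = x^p`, `y^{t⁻¹} = y^p`, `[x,y] = 1`, and
`[[x, y^{j t^i}], x] = 1` for all `i, j ∈ ℤ`. -/
def rels (p : ℕ) : Set (FreeGroup (Fin 3)) :=
  {cnj X T * (X ^ p)⁻¹, cnj Y T⁻¹ * (Y ^ p)⁻¹, br X Y} ∪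
    ⋃ (i : ℤ) (j : ℤ), {br (br X (cnj (Y ^ j) (T ^ i))) X}

/-- The group `G = ⟨x, y, t | x^t = x^p, y^{t⁻¹} = y^p, [x,y] = 1,
[[x, y^{j t^i}], x] = 1 (i,j ∈ ℤ)⟩`. -/
def G (p : ℕ) : Type := PresentedGroup (rels p)

instance (p : ℕ) : Group (G p) := by unfold G; infer_instance

/-- The image of the generator `x` in `G`. -/
def x (p : ℕ) : G p := PresentedGroup.of 0

/-- The image of the generator `y` in `G`. -/
def y (p : ℕ) : G p := PresentedGroup.of 1

/-- The image of the generator `t` in `G`. -/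
def t (p : ℕ) : G p := PresentedGroup.of 2

/-- The normal closure `H = ⟨x, y⟩^G`. -/
def H (p : ℕ) : Subgroup (G p) := Subgroup.normalClosure {x p, y p}

end MikhailovGroup


/-!
Write `u k = x^{t^k}` and `v k = y^{t^k}`. The relations give `u (k+1) = (u k)^p` and
`v (k-1) = (v k)^p`, so `V = ⟨v k | k ∈ ℤ⟩` is an increasing union of the cyclic groups `⟨v k⟩`
and every `c ∈ V` is a power of a single `v i`. The last family of relations then says that
`u k` commutes with `(u k)^c` for all `c ∈ V`, hence the conjugates `(u k)^c` (`c ∈ V`) commute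
pairwise. Conjugation by `x`, `y`, `t` permutes them, so they generate an abelian normal subgroup
`U` containing `x`. Modulo `U` the generator `x` dies and `H` lands in the abelian subgroup
generated by the images of the `v k`, so `[H, H] ≤ U`. Finally `G/H` is cyclic, generated by `t`,
so `G'' ≤ [H, H] ≤ U` and `G''' ≤ [U, U] = 1`.
-/

open MikhailovGroup Subgroup

section GroupLemmas

variable {Γ Δ : Type*} [Group Γ] [Group Δ]

theorem map_cnj (f : Γ →* Δ) (a b : Γ) : f (cnj a b) = cnj (f a) (f b) := by
  simp only [cnj, map_mul, map_inv]

theorem map_br (f : Γ →* Δ) (a b : Γ) : f (br a b) = br (f a) (f b) := by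
  simp only [br, map_mul, map_inv]

theorem cnj_eq_mulAutConj (a b : Γ) : cnj a b = MulAut.conj b⁻¹ a := by
  simp [cnj]

theorem cnj_pow (a b : Γ) (n : ℕ) : cnj (a ^ n) b = cnj a b ^ n := by
  simp only [cnj_eq_mulAutConj, map_pow]

theorem cnj_zpow (a b : Γ) (n : ℤ) : cnj (a ^ n) b = cnj a b ^ n := by
  simp only [cnj_eq_mulAutConj, map_zpow]

theorem cnj_one (a : Γ) : cnj a 1 = a := by simp [cnj]

theorem cnj_cnj (a b c : Γ) : cnj (cnj a b) c = cnj a (b * c) := by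
  simp only [cnj]; group

theorem cnj_cnj_eq_cnj_cnj (a b c : Γ) : cnj (cnj a b) c = cnj (cnj a c) (cnj b c) := by
  simp only [cnj]; group

theorem cnj_br (a b c : Γ) : cnj (br a b) c = br (cnj a c) (cnj b c) := by
  simp only [cnj, br]; group

theorem cnj_eq_mul_br (a b : Γ) : cnj a b = a * br a b := by
  simp only [cnj, br]; group

theorem br_eq_one_iff {a b : Γ} : br a b = 1 ↔ Commute a b := by
  rw [show br a b = (b * a)⁻¹ * (a * b) by simp only [br]; group, inv_mul_eq_one,
    commute_iff_eq, eq_comm]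

theorem Commute.cnj_cnj {a b : Γ} (h : Commute a b) (c : Γ) : Commute (cnj a c) (cnj b c) := by
  simpa only [cnj_eq_mulAutConj] using h.map (MulAut.conj c⁻¹)

theorem Subgroup.mem_normalizer_of_cnj_mem {S : Set Γ} {g : Γ} (h₁ : ∀ a ∈ S, cnj a g ∈ S)
    (h₂ : ∀ a ∈ S, cnj a g⁻¹ ∈ S) : g ∈ normalizer S := by
  refine mem_set_normalizer_iff''.2 fun a => ⟨h₁ a, fun ha => ?_⟩
  simpa only [cnj_cnj, mul_inv_cancel, cnj_one] using h₂ (cnj a g) ha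

theorem Subgroup.closure_normal_of_subset_normalizer {s S : Set Γ} (hs : closure s = ⊤)
    (hsS : s ⊆ normalizer S) : (closure S).Normal := by
  rw [← normalizer_eq_top_iff, eq_top_iff, ← hs, closure_le]
  exact hsS.trans (normalizer_le_normalizer_closure S)

theorem Subgroup.closure_image_eq_top {f : Γ →* Δ} (hf : Function.Surjective f) {s : Set Γ}
    (hs : closure s = ⊤) : closure (f '' s) = ⊤ := by
  rw [← MonoidHom.map_closure, hs, map_top_of_surjective f hf]

theorem Subgroup.commutator_le_ker_of_le_comap {f : Γ →* Δ} {K : Subgroup Γ} {A : Subgroup Δ}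
    [IsMulCommutative A] (hKA : K ≤ A.comap f) : ⁅K, K⁆ ≤ f.ker := by
  rw [← map_eq_bot_iff, map_commutator, eq_bot_iff,
    ← commutator_self_eq_bot_iff.2 (inferInstance : IsMulCommutative A)]
  exact commutator_mono (map_le_iff_le_comap.2 hKA) (map_le_iff_le_comap.2 hKA)

theorem Subgroup.commutator_le_of_subset_insert {N : Subgroup Γ} [N.Normal] {s : Set Γ} {g : Γ}
    (hs : closure s = ⊤) (hsN : s ⊆ insert g N) : _root_.commutator Γ ≤ N := by
  have hcyc : (⊤ : Subgroup Γ) ≤ (zpowers (g : Γ ⧸ N)).comap (QuotientGroup.mk' N) := by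
    rw [← hs, closure_le]
    intro a ha
    rcases hsN ha with rfl | haN
    · exact mem_zpowers _
    · simp [(QuotientGroup.eq_one_iff a).2 haN]
  simpa only [_root_.commutator, QuotientGroup.ker_mk'] using commutator_le_ker_of_le_comap hcyc

theorem Subgroup.derivedSeries_two_eq_bot_of_commutator_le {K A : Subgroup Γ} [IsMulCommutative A]
    (hKA : ⁅K, K⁆ ≤ A) : derivedSeries K 2 = ⊥ := by
  rw [← map_eq_bot_iff_of_injective _ K.subtype_injective, eq_bot_iff,
    ← commutator_self_eq_bot_iff.2 (inferInstance : IsMulCommutative A)]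
  simp only [derivedSeries_succ, derivedSeries_zero, map_commutator, ← MonoidHom.range_eq_map,
    range_subtype]
  exact commutator_mono hKA hKA

end GroupLemmas

namespace MikhailovGroup

variable {p : ℕ}

theorem closure_x_y_t : closure {x p, y p, t p} = ⊤ := by
  refine eq_top_iff.2 ((PresentedGroup.closure_range_of (rels p)).ge.trans (closure_mono ?_))
  rintro _ ⟨j, rfl⟩
  fin_cases j
  exacts [Or.inl rfl, Or.inr (Or.inl rfl), Or.inr (Or.inr rfl)]

theorem cnj_x_t : cnj (x p) (t p) = x p ^ p := by
  have h := PresentedGroup.mk_eq_mk_of_mul_inv_mem (rels := rels p) (x := cnj X T) (y := X ^ p)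
    (by simp [rels])
  rwa [map_cnj, map_pow] at h

theorem cnj_y_t_inv : cnj (y p) (t p)⁻¹ = y p ^ p := by
  have h := PresentedGroup.mk_eq_mk_of_mul_inv_mem (rels := rels p) (x := cnj Y T⁻¹) (y := Y ^ p)
    (by simp [rels])
  rwa [map_cnj, map_pow, map_inv] at h

theorem commute_br_x_cnj_y (i j : ℤ) : Commute (br (x p) (cnj (y p ^ j) (t p ^ i))) (x p) := by
  have h := PresentedGroup.one_of_mem (rels := rels p) (x := br (br X (cnj (Y ^ j) (T ^ i))) X)
    (by simp [rels])
  rw [map_br, map_br, map_cnj, map_zpow, map_zpow] at h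
  exact br_eq_one_iff.1 h

variable (p) in
def u (k : ℤ) : G p := cnj (x p) (t p ^ k)

variable (p) in
def v (k : ℤ) : G p := cnj (y p) (t p ^ k)

theorem cnj_u_t_zpow (k j : ℤ) : cnj (u p k) (t p ^ j) = u p (k + j) := by
  rw [u, u, cnj_cnj, zpow_add]

theorem cnj_v_t_zpow (k j : ℤ) : cnj (v p k) (t p ^ j) = v p (k + j) := by
  rw [v, v, cnj_cnj, zpow_add]

theorem cnj_v_t (k : ℤ) : cnj (v p k) (t p) = v p (k + 1) := by
  simpa only [zpow_one] using cnj_v_t_zpow k 1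

theorem cnj_v_t_inv (k : ℤ) : cnj (v p k) (t p)⁻¹ = v p (k - 1) := by
  simpa only [zpow_neg_one, ← sub_eq_add_neg] using cnj_v_t_zpow k (-1)

theorem v_zero : v p 0 = y p := by rw [v, zpow_zero, cnj_one]

theorem u_add_one (k : ℤ) : u p (k + 1) = u p k ^ p := by
  rw [u, add_comm, zpow_add, zpow_one, ← cnj_cnj, cnj_x_t, cnj_pow, u]

theorem v_sub_one (k : ℤ) : v p (k - 1) = v p k ^ p := by
  rw [v, sub_eq_neg_add, zpow_add, zpow_neg_one, ← cnj_cnj, cnj_y_t_inv, cnj_pow, v]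

theorem antitone_zpowers_u : Antitone fun k => zpowers (u p k) :=
  antitone_int_of_succ_le fun k => by
    simpa only [zpowers_le, u_add_one] using npow_mem_zpowers (u p k) p

theorem monotone_zpowers_v : Monotone fun k => zpowers (v p k) :=
  monotone_int_of_le_succ fun k => by
    simpa only [zpowers_le, ← v_sub_one, add_sub_cancel_right] using
      npow_mem_zpowers (v p (k + 1)) p

variable (p) in
def V : Subgroup (G p) := ⨆ i, zpowers (v p i)

theorem mem_V_iff {c : G p} : c ∈ V p ↔ ∃ i, c ∈ zpowers (v p i) :=
  mem_iSup_of_directed monotone_zpowers_v.directed_le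

theorem v_mem_V (i : ℤ) : v p i ∈ V p := mem_V_iff.2 ⟨i, mem_zpowers _⟩

theorem y_mem_V : y p ∈ V p := v_zero (p := p) ▸ v_mem_V 0

theorem cnj_t_zpow_mem_V {c : G p} (hc : c ∈ V p) (j : ℤ) : cnj c (t p ^ j) ∈ V p := by
  obtain ⟨i, n, rfl⟩ := mem_V_iff.1 hc
  rw [cnj_zpow, cnj_v_t_zpow]
  exact zpow_mem (v_mem_V _) n

theorem commute_of_mem_V {c d : G p} (hc : c ∈ V p) (hd : d ∈ V p) : Commute c d := by
  obtain ⟨i, hi⟩ := mem_V_iff.1 hc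
  obtain ⟨j, hj⟩ := mem_V_iff.1 hd
  obtain ⟨m, rfl⟩ := mem_zpowers_iff.1 (monotone_zpowers_v (le_max_left i j) hi)
  obtain ⟨n, rfl⟩ := mem_zpowers_iff.1 (monotone_zpowers_v (le_max_right i j) hj)
  exact Commute.zpow_zpow_self _ m n

theorem commute_u_cnj_u (k : ℤ) {c : G p} (hc : c ∈ V p) : Commute (u p k) (cnj (u p k) c) := by
  obtain ⟨i, n, rfl⟩ := mem_V_iff.1 hc
  have h := (commute_br_x_cnj_y (p := p) (i - k) n).cnj_cnj (t p ^ k)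
  rw [cnj_br, cnj_cnj, ← zpow_add, sub_add_cancel, cnj_zpow] at h
  rw [cnj_eq_mul_br]
  exact (Commute.refl _).mul_right h.symm

theorem commute_cnj_u_cnj_u (k : ℤ) {c d : G p} (hc : c ∈ V p) (hd : d ∈ V p) :
    Commute (cnj (u p k) c) (cnj (u p k) d) := by
  have h := (commute_u_cnj_u k (mul_mem hd (inv_mem hc))).cnj_cnj c
  rwa [cnj_cnj, inv_mul_cancel_right] at h

variable (p) in
def conjU : Set (G p) := {g | ∃ k, ∃ c ∈ V p, cnj (u p k) c = g}

theorem commute_of_mem_conjU {g h : G p} (hg : g ∈ conjU p) (hh : h ∈ conjU p) : Commute g h := by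
  obtain ⟨k, c, hc, rfl⟩ := hg
  obtain ⟨l, d, hd, rfl⟩ := hh
  obtain ⟨m, hm⟩ := mem_zpowers_iff.1 (antitone_zpowers_u (min_le_left k l) (mem_zpowers _))
  obtain ⟨n, hn⟩ := mem_zpowers_iff.1 (antitone_zpowers_u (min_le_right k l) (mem_zpowers _))
  rw [← hm, ← hn, cnj_zpow, cnj_zpow]
  exact (commute_cnj_u_cnj_u _ hc hd).zpow_zpow m n

theorem x_mem_conjU : x p ∈ conjU p := ⟨0, 1, one_mem _, by simp [u, cnj_one]⟩

theorem cnj_mem_conjU {g c : G p} (hg : g ∈ conjU p) (hc : c ∈ V p) : cnj g c ∈ conjU p := by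
  obtain ⟨k, d, hd, rfl⟩ := hg
  exact ⟨k, d * c, mul_mem hd hc, (cnj_cnj _ _ _).symm⟩

theorem cnj_t_zpow_mem_conjU {g : G p} (hg : g ∈ conjU p) (j : ℤ) :
    cnj g (t p ^ j) ∈ conjU p := by
  obtain ⟨k, c, hc, rfl⟩ := hg
  exact ⟨k + j, cnj c (t p ^ j), cnj_t_zpow_mem_V hc j,
    by rw [cnj_cnj_eq_cnj_cnj, cnj_u_t_zpow]⟩

theorem x_y_t_subset_normalizer_conjU : ({x p, y p, t p} : Set (G p)) ⊆ normalizer (conjU p) := by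
  simp only [Set.insert_subset_iff, Set.singleton_subset_iff]
  refine ⟨centralizer_le_normalizer _ fun g hg => (commute_of_mem_conjU hg x_mem_conjU).eq,
    mem_normalizer_of_cnj_mem (fun g hg => cnj_mem_conjU hg y_mem_V)
      (fun g hg => cnj_mem_conjU hg (inv_mem y_mem_V)),
    mem_normalizer_of_cnj_mem (fun g hg => ?_) (fun g hg => ?_)⟩
  · simpa only [zpow_one] using cnj_t_zpow_mem_conjU hg 1
  · simpa only [zpow_neg_one] using cnj_t_zpow_mem_conjU hg (-1)

variable (p) in
def U : Subgroup (G p) := closure (conjU p)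

instance U_normal : (U p).Normal :=
  closure_normal_of_subset_normalizer closure_x_y_t x_y_t_subset_normalizer_conjU

instance : IsMulCommutative (U p) :=
  isMulCommutative_closure fun _ hg _ hh => (commute_of_mem_conjU hg hh).eq

theorem x_mem_U : x p ∈ U p := subset_closure x_mem_conjU

variable (p) in
def W : Subgroup (G p ⧸ U p) := closure (Set.range fun i => (v p i : G p ⧸ U p))

instance : IsMulCommutative (W p) := isMulCommutative_closure <| by
  rintro _ ⟨i, rfl⟩ _ ⟨j, rfl⟩
  exact ((commute_of_mem_V (v_mem_V i) (v_mem_V j)).map (QuotientGroup.mk' (U p))).eq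

instance W_normal : (W p).Normal := by
  refine closure_normal_of_subset_normalizer
    (closure_image_eq_top (QuotientGroup.mk'_surjective (U p)) closure_x_y_t) ?_
  simp only [Set.image_insert_eq, Set.image_singleton, Set.insert_subset_iff,
    Set.singleton_subset_iff, QuotientGroup.mk'_apply]
  refine ⟨?_, centralizer_le_normalizer _ ?_, mem_normalizer_of_cnj_mem ?_ ?_⟩
  · rw [(QuotientGroup.eq_one_iff _).2 x_mem_U]
    exact one_mem _
  · rintro _ ⟨i, rfl⟩
    exact ((commute_of_mem_V (v_mem_V i) y_mem_V).map (QuotientGroup.mk' (U p))).eq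
  · rintro _ ⟨i, rfl⟩
    exact ⟨i + 1, by dsimp only; rw [← cnj_v_t]; exact map_cnj (QuotientGroup.mk' (U p)) _ _⟩
  · rintro _ ⟨i, rfl⟩
    exact ⟨i - 1, by dsimp only; rw [← cnj_v_t_inv]; exact map_cnj (QuotientGroup.mk' (U p)) _ _⟩

instance : (H p).Normal := normalClosure_normal

theorem H_le_comap_W : H p ≤ (W p).comap (QuotientGroup.mk' (U p)) := by
  refine normalClosure_le_normal ?_
  rintro _ (rfl | rfl)
  · simp [(QuotientGroup.eq_one_iff _).2 x_mem_U]
  · show ((y p : G p) : G p ⧸ U p) ∈ W p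
    exact v_zero (p := p) ▸ subset_closure ⟨0, rfl⟩

theorem commutator_H_le_U : ⁅H p, H p⁆ ≤ U p := by
  simpa only [QuotientGroup.ker_mk'] using commutator_le_ker_of_le_comap H_le_comap_W

theorem commutator_G_le_H : _root_.commutator (G p) ≤ H p :=
  commutator_le_of_subset_insert (g := t p) closure_x_y_t <| by
    simp only [Set.insert_subset_iff, Set.singleton_subset_iff]
    exact ⟨.inr (subset_normalClosure (.inl rfl)), .inr (subset_normalClosure (.inr rfl)), .inl rfl⟩

end MikhailovGroup

open MikhailovGroup in
theorem mikhailov_H_metabelian_G_solvable_general (p : ℕ) :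
    derivedSeries ↥(H p) 2 = ⊥ ∧ derivedSeries (G p) 3 = ⊥ := by
  refine ⟨derivedSeries_two_eq_bot_of_commutator_le commutator_H_le_U, ?_⟩
  have h2 : derivedSeries (G p) 2 ≤ U p := by
    rw [derivedSeries_succ, derivedSeries_one]
    exact (commutator_mono commutator_G_le_H commutator_G_le_H).trans commutator_H_le_U
  rw [eq_bot_iff, derivedSeries_succ,
    ← commutator_self_eq_bot_iff.2 (inferInstance : IsMulCommutative (U p))]
  exact commutator_mono h2 h2

open MikhailovGroup in
/-- the normal closure `H` of `{x, y}` in `G` is metabelian, and `G` is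
solvable of derived length at most `3`. -/
theorem mikhailov_H_metabelian_G_solvable (p : ℕ) (hp : p.Prime) :
    derivedSeries ↥(H p) 2 = ⊥ ∧ derivedSeries (G p) 3 = ⊥ :=
  mikhailov_H_metabelian_G_solvable_general p
end

section
/- Let Γ = ℤ_{p^∞} ≀ ℤ_{p^∞} be the restricted wreath product of two Prüfer p-groups, with base group Z = ⊕_{b ∈ ℤ_{p^∞}} ℤ_{p^∞}. Identify the base with the group ring module: elements (Σ_b a_b u^b, u^{b₀}). For z = 1/p^i + ℤ in the first copy and y = (p-1)/p^i + ℤ acting, the j-fold Engel bracket [z, _j y] corresponds to (1/p^i)(u^{(p-1)/p^i} − 1)^j in the module ℤ_{p^∞}[ℤ_{p^∞}], and for j < i this element has additive order exactly p^i. -/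
section Wreath

variable (A : Type*) [AddCommGroup A] (B : Type*) [CommGroup B]

/-- Translation of the index in the restricted direct product `B →₀ A`:
`a·u^c ↦ a·u^{b·c}` (multiplication of the exponent by `b`). -/
def wrShift (b : B) : (B →₀ A) ≃+ (B →₀ A) :=
  Finsupp.domCongr (Equiv.mulLeft b)

/-- The action of `B` on the base group of the wreath product, permuting coordinates. -/
noncomputable def wrPhi : B →* MulAut (Multiplicative (B →₀ A)) where
  toFun b := AddEquiv.toMultiplicative (wrShift A B b⁻¹)
  map_one' := by
    ext f : 1
    show Multiplicative.ofAdd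
        (Finsupp.equivMapDomain (Equiv.mulLeft (1 : B)⁻¹) (Multiplicative.toAdd f)) =
      Multiplicative.ofAdd (Multiplicative.toAdd f)
    refine congrArg Multiplicative.ofAdd (Finsupp.ext fun a => ?_)
    simp only [Finsupp.equivMapDomain_apply, Equiv.mulLeft_symm, Equiv.coe_mulLeft, inv_inv,
      inv_one, one_mul]
  map_mul' b₁ b₂ := by
    ext f : 1
    show Multiplicative.ofAdd
        (Finsupp.equivMapDomain (Equiv.mulLeft (b₁ * b₂)⁻¹) (Multiplicative.toAdd f)) =
      Multiplicative.ofAdd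
        (Finsupp.equivMapDomain (Equiv.mulLeft b₁⁻¹)
          (Finsupp.equivMapDomain (Equiv.mulLeft b₂⁻¹) (Multiplicative.toAdd f)))
    refine congrArg Multiplicative.ofAdd (Finsupp.ext fun a => ?_)
    simp only [Finsupp.equivMapDomain_apply, Equiv.mulLeft_symm, Equiv.coe_mulLeft, inv_inv]
    rw [mul_assoc, mul_left_comm]

/-- The (restricted, regular) wreath product `A ≀ B` of an abelian group `A` (written
additively) and an abelian group `B`: the semidirect product `(⊕_{b ∈ B} A) ⋊ B`. -/
abbrev Wr : Type _ := SemidirectProduct (Multiplicative (B →₀ A)) B (wrPhi A B)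

end Wreath


/-- The group ℚ/ℤ. -/
abbrev QZ : Type := ℚ ⧸ AddSubgroup.zmultiples (1 : ℚ)

/-- The Prüfer `p`-group `ℤ_{p^∞}`, realized as the `p`-primary torsion subgroup of ℚ/ℤ:
elements killed by some power of `p`. -/
def Prufer (p : ℕ) : AddSubgroup QZ where
  carrier := {x | ∃ k : ℕ, (p ^ k : ℕ) • x = 0}
  zero_mem' := ⟨0, smul_zero _⟩
  add_mem' := by
    rintro x y ⟨k, hk⟩ ⟨l, hl⟩
    refine ⟨k + l, ?_⟩
    have h1 : (p ^ (k + l) : ℕ) • x = 0 := by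
      rw [pow_add, mul_comm, mul_nsmul', hk, smul_zero]
    have h2 : (p ^ (k + l) : ℕ) • y = 0 := by
      rw [pow_add, mul_nsmul', hl, smul_zero]
    rw [smul_add, h1, h2, add_zero]
  neg_mem' := by
    rintro x ⟨k, hk⟩
    exact ⟨k, by rw [smul_neg, hk, neg_zero]⟩

/-- The element `m / p^i + ℤ` of the Prüfer `p`-group. -/
def mkP (p : ℕ) (hp : p ≠ 0) (i : ℕ) (m : ℤ) : ↥(Prufer p) :=
  ⟨QuotientAddGroup.mk ((m : ℚ) / (p : ℚ) ^ i), by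
    refine ⟨i, ?_⟩
    have hpi : ((p : ℚ) ^ i) ≠ 0 := pow_ne_zero i (Nat.cast_ne_zero.mpr hp)
    have hq : (p ^ i : ℕ) • ((m : ℚ) / (p : ℚ) ^ i) = (m : ℚ) := by
      rw [nsmul_eq_mul]
      push_cast
      field_simp
    rw [← QuotientAddGroup.mk_nsmul, hq, QuotientAddGroup.eq_zero_iff]
    exact ⟨m, by simp⟩⟩

/-- The Engel brackets: `engelBr g h 0 = g`, `engelBr g h (n+1) = [engelBr g h n, h]`,
so `engelBr g h j = [g, _j h]`. -/
def engelBr {G : Type*} [Group G] (g h : G) : ℕ → G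
  | 0 => g
  | n + 1 => br (engelBr g h n) h

/-!
Conjugation by the top element `y` permutes coordinates, so commuting a base element with `y`
multiplies it by `u^y - 1`; hence `[z, _j y] = (1/p^i)(u^y - 1)^j`. This element is supported on
the powers `u^{ky}`, `k ≤ j`, and since `y` has order `p^i > j` its coefficient at `u^0` is
`(-1)^j/p^i`. So its order is divisible by the order of that coefficient and divides that of
`1/p^i`, and both are `p^i`.
-/

section Wreath

variable {A : Type*} [AddCommGroup A] {B : Type*} [CommGroup B]

/-- Multiplication by `u^b - 1` on the base group `B →₀ A`, viewed as a `ℤ[B]`-module. -/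
noncomputable def wrDiff (b : B) : AddMonoid.End (B →₀ A) :=
  (wrShift A B b).toAddMonoidHom - AddMonoidHom.id _

theorem wrDiff_eq (b : B) (f : B →₀ A) :
    wrDiff b f = Finsupp.equivMapDomain (Equiv.mulLeft b) f - f := rfl

theorem wrDiff_apply (b : B) (f : B →₀ A) (c : B) : wrDiff b f c = f (b⁻¹ * c) - f c := by
  simp [wrDiff_eq, Finsupp.equivMapDomain_apply]

theorem wrPhi_ofAdd (b : B) (f : B →₀ A) :
    wrPhi A B b (Multiplicative.ofAdd f) =
      Multiplicative.ofAdd (Finsupp.equivMapDomain (Equiv.mulLeft b⁻¹) f) := rfl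

theorem br_base_top (b : B) (f : B →₀ A) :
    br (⟨Multiplicative.ofAdd f, 1⟩ : Wr A B) ⟨1, b⟩ =
      ⟨Multiplicative.ofAdd (wrDiff b f), 1⟩ := by
  refine SemidirectProduct.ext ?_ (by simp [br])
  simp only [br, SemidirectProduct.mul_left, SemidirectProduct.mul_right,
    SemidirectProduct.inv_left, SemidirectProduct.inv_right, inv_one, map_one,
    MulAut.one_apply, mul_one, one_mul]
  rw [wrPhi_ofAdd, inv_inv, mul_comm, ← ofAdd_neg, ← ofAdd_add, ← sub_eq_add_neg]
  rfl

theorem engelBr_base_top (b : B) (f : B →₀ A) (j : ℕ) :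
    engelBr (⟨Multiplicative.ofAdd f, 1⟩ : Wr A B) ⟨1, b⟩ j =
      ⟨Multiplicative.ofAdd ((wrDiff b)^[j] f), 1⟩ := by
  induction j with
  | zero => rfl
  | succ n ih => rw [engelBr, ih, br_base_top, Function.iterate_succ_apply']

theorem wrDiff_iterate_single_ne_zero {b : B} {a : A} {j : ℕ} {c : B}
    (hc : (wrDiff b)^[j] (Finsupp.single 1 a) c ≠ 0) : ∃ k ≤ j, c = b ^ k := by
  induction j generalizing c with
  | zero => exact ⟨0, le_rfl, ((Finsupp.single_apply_ne_zero.mp hc).1).trans (pow_zero b).symm⟩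
  | succ n ih =>
    rw [Function.iterate_succ_apply', wrDiff_apply] at hc
    by_cases hprev : (wrDiff b)^[n] (Finsupp.single 1 a) (b⁻¹ * c) = 0
    · obtain ⟨k, hk, rfl⟩ := ih fun h => hc (by rw [hprev, h, sub_zero])
      exact ⟨k, hk.trans n.le_succ, rfl⟩
    · obtain ⟨k, hk, hck⟩ := ih hprev
      exact ⟨k + 1, Nat.succ_le_succ hk, by rw [pow_succ', ← hck, mul_inv_cancel_left]⟩

theorem wrDiff_iterate_single_apply_one {b : B} (a : A) {j : ℕ}
    (hb : ∀ m, 0 < m → m ≤ j → b ^ m ≠ 1) :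
    (wrDiff b)^[j] (Finsupp.single 1 a) 1 = (-1 : ℤ) ^ j • a := by
  induction j with
  | zero => simp
  | succ n ih =>
    have hinv : (wrDiff b)^[n] (Finsupp.single 1 a) b⁻¹ = 0 := by
      by_contra h
      obtain ⟨k, hk, hbk⟩ := wrDiff_iterate_single_ne_zero h
      exact hb (k + 1) k.succ_pos (Nat.succ_le_succ hk) (by rw [pow_succ, ← hbk, inv_mul_cancel])
    rw [Function.iterate_succ_apply', wrDiff_apply, mul_one, hinv,
      ih fun m hm hmn => hb m hm (hmn.trans n.le_succ), zero_sub, pow_succ, mul_neg_one, neg_smul]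

theorem addOrderOf_wrDiff_iterate_single {b : B} (a : A) {j : ℕ}
    (hb : ∀ m, 0 < m → m ≤ j → b ^ m ≠ 1) :
    addOrderOf ((wrDiff b)^[j] (Finsupp.single 1 a)) = addOrderOf a := by
  apply Nat.dvd_antisymm
  · calc addOrderOf ((wrDiff b)^[j] (Finsupp.single 1 a))
          = addOrderOf ((wrDiff b ^ j) (Finsupp.single 1 a)) := by rw [AddMonoid.End.coe_pow]
      _ ∣ addOrderOf (Finsupp.single 1 a) := addOrderOf_map_dvd (wrDiff b ^ j) _
      _ = addOrderOf a :=
        addOrderOf_injective (Finsupp.singleAddHom 1) (Finsupp.single_injective 1) a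
  · have hsign : addOrderOf ((-1 : ℤ) ^ j • a) = addOrderOf a := by
      rcases neg_one_pow_eq_or ℤ j with h | h <;> simp [h]
    rw [← hsign, ← wrDiff_iterate_single_apply_one a hb]
    exact addOrderOf_map_dvd (Finsupp.applyAddHom (M := A) (1 : B)) _

end Wreath

theorem nsmul_mkP_eq_zero_iff (p : ℕ) (hp : p ≠ 0) (i : ℕ) (m : ℤ) (n : ℕ) :
    n • mkP p hp i m = 0 ↔ (p : ℤ) ^ i ∣ n * m := by
  have hpi : (p : ℚ) ^ i ≠ 0 := pow_ne_zero _ (Nat.cast_ne_zero.mpr hp)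
  rw [← ZeroMemClass.coe_eq_zero, AddSubgroupClass.coe_nsmul, mkP, ← QuotientAddGroup.mk_nsmul,
    QuotientAddGroup.eq_zero_iff, AddSubgroup.mem_zmultiples_iff]
  refine exists_congr fun z => ?_
  rw [zsmul_eq_mul, mul_one, nsmul_eq_mul, mul_div_assoc', eq_comm,
    div_eq_iff hpi, mul_comm (z : ℚ)]
  exact_mod_cast Iff.rfl

theorem addOrderOf_mkP (p : ℕ) (hp : p ≠ 0) (i : ℕ) {m : ℤ} (hm : IsCoprime (p : ℤ) m) :
    addOrderOf (mkP p hp i m) = p ^ i := by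
  have hkill : ∀ n : ℕ, n • mkP p hp i m = 0 ↔ p ^ i ∣ n := fun n => by
    rw [nsmul_mkP_eq_zero_iff, ← Int.natCast_dvd_natCast, Nat.cast_pow]
    exact ⟨hm.pow_left.dvd_of_dvd_mul_right, (Dvd.dvd.mul_right · m)⟩
  exact Nat.dvd_antisymm (addOrderOf_dvd_of_nsmul_eq_zero ((hkill _).2 dvd_rfl))
    ((hkill _).1 (addOrderOf_nsmul_eq_zero _))

theorem wreath_prufer_engel_order_general (p : ℕ) (hp : p.Prime) (i : ℕ) (j : ℕ) :
    engelBr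
        (⟨Multiplicative.ofAdd (Finsupp.single 1 (mkP p hp.ne_zero i 1)), 1⟩ :
          Wr ↥(Prufer p) (Multiplicative ↥(Prufer p)))
        ⟨1, Multiplicative.ofAdd (mkP p hp.ne_zero i ((p : ℤ) - 1))⟩ j =
      ⟨Multiplicative.ofAdd
          ((fun f => Finsupp.equivMapDomain
              (Equiv.mulLeft (Multiplicative.ofAdd (mkP p hp.ne_zero i ((p : ℤ) - 1)))) f
              - f)^[j]
            (Finsupp.single 1 (mkP p hp.ne_zero i 1))),
        1⟩ ∧
      (j < i →
        addOrderOf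
          ((fun f => Finsupp.equivMapDomain
              (Equiv.mulLeft (Multiplicative.ofAdd (mkP p hp.ne_zero i ((p : ℤ) - 1)))) f
              - f)^[j]
            (Finsupp.single 1 (mkP p hp.ne_zero i 1))) = p ^ i) := by
  set b := Multiplicative.ofAdd (mkP p hp.ne_zero i ((p : ℤ) - 1))
  refine ⟨engelBr_base_top b _ j, fun hj => ?_⟩
  have hb : orderOf b = p ^ i :=
    (orderOf_ofAdd_eq_addOrderOf _).trans (addOrderOf_mkP p hp.ne_zero i ⟨1, -1, by ring⟩)
  have hjb : j < orderOf b := hb ▸ hj.trans (Nat.lt_pow_self hp.one_lt)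
  rw [← addOrderOf_mkP p hp.ne_zero i isCoprime_one_right]
  exact addOrderOf_wrDiff_iterate_single _ fun m hm hmj =>
    pow_ne_one_of_lt_orderOf hm.ne' (hmj.trans_lt hjb)

/-- in `Γ = ℤ_{p^∞} ≀ ℤ_{p^∞}`, for `z = 1/p^i + ℤ` in the first copy and
`y = (p−1)/p^i + ℤ` acting, the `j`-fold Engel bracket `[z, _j y]` corresponds to the
module element `(1/p^i)·(u^{(p−1)/p^i} − 1)^j` (obtained by applying `f ↦ u^y·f − f`
`j` times to `(1/p^i)·u^0`), and for `j < i` this element has additive order exactly `p^i`. -/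
theorem wreath_prufer_engel_order (p : ℕ) (hp : p.Prime) (i : ℕ) (hi : 1 ≤ i) (j : ℕ) :
    engelBr
        (⟨Multiplicative.ofAdd (Finsupp.single 1 (mkP p hp.ne_zero i 1)), 1⟩ :
          Wr ↥(Prufer p) (Multiplicative ↥(Prufer p)))
        ⟨1, Multiplicative.ofAdd (mkP p hp.ne_zero i ((p : ℤ) - 1))⟩ j =
      ⟨Multiplicative.ofAdd
          ((fun f => Finsupp.equivMapDomain
              (Equiv.mulLeft (Multiplicative.ofAdd (mkP p hp.ne_zero i ((p : ℤ) - 1)))) f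
              - f)^[j]
            (Finsupp.single 1 (mkP p hp.ne_zero i 1))),
        1⟩ ∧
      (j < i →
        addOrderOf
          ((fun f => Finsupp.equivMapDomain
              (Equiv.mulLeft (Multiplicative.ofAdd (mkP p hp.ne_zero i ((p : ℤ) - 1)))) f
              - f)^[j]
            (Finsupp.single 1 (mkP p hp.ne_zero i 1))) = p ^ i) :=
  wreath_prufer_engel_order_general p hp i j
end

section
/- Let p be a prime, i ≥ 1, and consider the group ring element (u^{(p-1)/p^i + ℤ} − 1)^j ∈ ℤ[ℤ_{p^∞}] acting on the element 1/p^i + ℤ of ℤ_{p^∞} ⊗ (group ring over ℤ_{p^∞}). Expanding by the binomial theorem, the coefficient of the constant term u^0 is (−1)^j only when all cancellations fail; for j < i the resulting element of ⊕_{b} ℤ_{p^∞} is nonzero, since the summand at b = 0 equals (−1)^j/p^i + ℤ ≠ 0 (all other terms u^{k(p-1)/p^i} with 1 ≤ k ≤ j < i have k(p-1)/p^i ∉ ℤ). -/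
/-! Only the summand `k = 0` contributes to the coefficient at `0 = mkP 0`: for `1 ≤ k ≤ j < i`,
Bernoulli's inequality gives `0 < k (p - 1) < p ^ i`, so `k (p - 1) / p ^ i ∉ ℤ`. That coefficient
is `±(1 / p ^ i) ≠ 0`. -/

lemma mkP_eq_zero_iff (p : ℕ) (hp : p ≠ 0) (i : ℕ) (m : ℤ) :
    mkP p hp i m = 0 ↔ (p : ℤ) ^ i ∣ m := by
  have hpi : (p : ℚ) ^ i ≠ 0 := pow_ne_zero i (Nat.cast_ne_zero.mpr hp)
  rw [mkP, ← ZeroMemClass.coe_eq_zero, QuotientAddGroup.eq_zero_iff,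
    AddSubgroup.mem_zmultiples_iff]
  simp only [zsmul_eq_mul, mul_one, eq_div_iff hpi, dvd_iff_exists_eq_mul_left]
  exact exists_congr fun n => by norm_cast; exact eq_comm

lemma mkP_ne_zero_of_pos_of_lt {p : ℕ} (hp : p ≠ 0) {i : ℕ} {m : ℤ} (h0 : 0 < m)
    (hlt : m < (p : ℤ) ^ i) : mkP p hp i m ≠ 0 :=
  fun h => h0.ne' (Int.eq_zero_of_dvd_of_nonneg_of_lt h0.le hlt ((mkP_eq_zero_iff p hp i m).mp h))

lemma mul_sub_one_lt_pow {a : ℤ} (ha : 1 ≤ a) {k n : ℕ} (hk : k < n) :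
    k * (a - 1) < a ^ n := by
  have bernoulli := one_add_mul_le_pow (a := a - 1) (by linarith) n
  rw [add_sub_cancel] at bernoulli
  have : (k : ℤ) * (a - 1) ≤ n * (a - 1) :=
    mul_le_mul_of_nonneg_right (by exact_mod_cast hk.le) (by linarith)
  linarith

/-- for a prime `p` and `j < i`, the element
`(1/p^i)·(u^{(p-1)/p^i} − 1)^j = Σ_{k=0}^{j} (−1)^{j−k} C(j,k) (1/p^i)·u^{k(p-1)/p^i}`
of the free module `⊕_{b ∈ ℤ_{p^∞}} ℤ_{p^∞}` is nonzero (its coefficient at `b = 0`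
is `(−1)^j/p^i ≠ 0`, and the indices `k(p−1)/p^i` for `1 ≤ k ≤ j` are not `0`). -/
theorem binomial_expansion_nonzero (p : ℕ) (hp : p.Prime) (i j : ℕ) (hji : j < i) :
    (∑ k ∈ Finset.range (j + 1),
        Finsupp.single (mkP p hp.ne_zero i ((k : ℤ) * ((p : ℤ) - 1)))
          (((-1 : ℤ) ^ (j - k) * (j.choose k : ℤ)) • mkP p hp.ne_zero i 1)) ≠
      (0 : ↥(Prufer p) →₀ ↥(Prufer p)) := by
  have hp1 : 1 < (p : ℤ) := by exact_mod_cast hp.one_lt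
  have hzero : mkP p hp.ne_zero i 0 = 0 := (mkP_eq_zero_iff _ _ _ _).mpr (dvd_zero _)
  have hshift : ∀ k ∈ Finset.range (j + 1), k ≠ 0 →
      mkP p hp.ne_zero i ((k : ℤ) * ((p : ℤ) - 1)) ≠ mkP p hp.ne_zero i 0 := by
    intro k hk hk0
    rw [hzero]
    refine mkP_ne_zero_of_pos_of_lt _ (by positivity) (mul_sub_one_lt_pow hp1.le ?_)
    have := Finset.mem_range.mp hk
    omega
  intro h
  have hcoeff := DFunLike.congr_fun h (mkP p hp.ne_zero i 0)
  rw [Finsupp.finsetSum_apply, Finset.sum_eq_single 0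
      (fun k hk hk0 => Finsupp.single_eq_of_ne (hshift k hk hk0).symm) (by simp)] at hcoeff
  simp only [Nat.cast_zero, zero_mul, Finsupp.single_eq_same, Nat.sub_zero, Nat.choose_zero_right,
    Nat.cast_one, mul_one, Finsupp.coe_zero, Pi.zero_apply,
    (isUnit_neg_one.pow j).smul_eq_zero] at hcoeff
  exact mkP_ne_zero_of_pos_of_lt _ one_pos (one_lt_pow₀ hp1 (by omega)) hcoeff
end
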